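/- arXiv:1510.01524 — 7 statements merged into one kernel-verified Lean document; each statement's English description precedes it below -/
import Mathlib

section
/- The pseudo-hyperbolic metric ρ_E(x,y) = ‖φ_x(y)‖ on the unit ball of a complex Hilbert space satisfies the sharpened triangle inequality ρ_E(x,y) ≤ (ρ_E(x,u) + ρ_E(u,y))/(1 + ρ_E(x,u)·ρ_E(u,y)) for all x, u, y in the open unit ball. -/
open scoped ComplexInnerProductSpace Classical

/-- The Möbius transform `φ_a` of the unit ball of a complex Hilbert space. -/
noncomputable def mobius {E : Type*} [NormedAddCommGroup E] [InnerProductSpace ℂ E]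
    (a x : E) : E :=
  if a = 0 then -x
  else
    let m : E := ((1 : ℂ) - ⟪a, x⟫)⁻¹ • (a - x)
    let Pm : E := (⟪a, m⟫ / (‖a‖ ^ 2 : ℂ)) • a
    (Real.sqrt (1 - ‖a‖ ^ 2) : ℂ) • (m - Pm) + Pm

/-- The pseudo-hyperbolic metric `ρ_E(x,y) = ‖φ_x(y)‖` on the unit ball. -/
noncomputable def rhoE {E : Type*} [NormedAddCommGroup E] [InnerProductSpace ℂ E]
    (x y : E) : ℝ := ‖mobius x y‖

/-!
For `‖a‖ ≤ 1` the Möbius map satisfies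
`‖φ_a(x)‖² |1 - ⟪a, x⟫|² = (1 - ‖a‖²) ‖a - x‖² + |⟪a, a - x⟫|²`, and the right-hand side equals
`|1 - ⟪a, x⟫|² - (1 - ‖a‖²)(1 - ‖x‖²)`. Thus `ρ(u, x) |1 - ⟪u, x⟫|` is the length of `u - x` for the
semi-inner product `B_u(v, w) = (1 - ‖u‖²)⟪v, w⟫ + ⟪v, u⟫⟪u, w⟫`. Expanding
`(1 - ‖u‖²)(1 - ⟪x, y⟫) = (1 - ⟪x, u⟫)(1 - ⟪u, y⟫) - B_u(u - x, u - y)` and applying Cauchy–Schwarz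
to `B_u` gives `(1 - ‖u‖²)|1 - ⟪x, y⟫| ≤ |1 - ⟪u, x⟫||1 - ⟪u, y⟫|(1 + ρ(u, x)ρ(u, y))`.
Inserting `1 - ρ(a, x)² = (1 - ‖a‖²)(1 - ‖x‖²)/|1 - ⟪a, x⟫|²` turns this into
`(1 - a²)(1 - b²) ≤ (1 - c²)(1 + ab)²` for `a = ρ(x, u)`, `b = ρ(u, y)`, `c = ρ(x, y)`, which is the
claim because `(1 + ab)² - (a + b)² = (1 - a²)(1 - b²)`.
-/

open scoped InnerProductSpace

theorem le_add_div_one_add_mul {a b c : ℝ} (ha : 0 ≤ a) (hb : 0 ≤ b)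
    (h : (1 - a ^ 2) * (1 - b ^ 2) ≤ (1 - c ^ 2) * (1 + a * b) ^ 2) :
    c ≤ (a + b) / (1 + a * b) := by
  have hab : 0 < 1 + a * b := by positivity
  refine (le_abs_self c).trans (abs_le_of_sq_le_sq ?_ (by positivity))
  rw [div_pow, le_div_iff₀ (by positivity)]
  linarith

theorem Real.mul_mul_add_mul_le_sqrt_mul_sqrt {t : ℝ} (ht : 0 ≤ t) (p q r s : ℝ) :
    t * (p * q) + r * s ≤ √(t * p ^ 2 + r ^ 2) * √(t * q ^ 2 + s ^ 2) := by
  rw [← Real.sqrt_mul (by positivity)]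
  apply Real.le_sqrt_of_sq_le
  nlinarith [mul_nonneg ht (sq_nonneg (p * s - q * r))]

theorem Complex.norm_ofReal_sub_sq (r : ℝ) (z : ℂ) :
    ‖(r : ℂ) - z‖ ^ 2 = r ^ 2 - 2 * r * z.re + ‖z‖ ^ 2 := by
  simp only [Complex.sq_norm, Complex.normSq_apply, Complex.sub_re, Complex.sub_im,
    Complex.ofReal_re, Complex.ofReal_im]
  ring

section RCLike

variable {𝕜 E : Type*} [RCLike 𝕜] [NormedAddCommGroup E] [InnerProductSpace 𝕜 E]

theorem Submodule.norm_sq_smul_sub_starProjection_add (K : Submodule 𝕜 E)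
    [K.HasOrthogonalProjection] (s : ℝ) (v : E) :
    ‖(s : 𝕜) • (v - K.starProjection v) + K.starProjection v‖ ^ 2
      = s ^ 2 * ‖v‖ ^ 2 + (1 - s ^ 2) * ‖K.starProjection v‖ ^ 2 := by
  have hperp := K.starProjection_inner_eq_zero v _ (K.starProjection_apply_mem v)
  have hv : ‖v‖ ^ 2 = ‖v - K.starProjection v‖ ^ 2 + ‖K.starProjection v‖ ^ 2 := by
    simpa [sq] using norm_add_sq_eq_norm_sq_add_norm_sq_of_inner_eq_zero _ _ hperp
  have hperp' : ⟪(s : 𝕜) • (v - K.starProjection v), K.starProjection v⟫_𝕜 = 0 := by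
    rw [inner_smul_left, hperp, mul_zero]
  rw [sq, norm_add_sq_eq_norm_sq_add_norm_sq_of_inner_eq_zero _ _ hperp', norm_smul,
    RCLike.norm_ofReal, ← sq_abs s, hv]
  ring

theorem Submodule.norm_mul_norm_starProjection_singleton (a v : E) :
    ‖a‖ * ‖(𝕜 ∙ a).starProjection v‖ = ‖⟪a, v⟫_𝕜‖ := by
  rcases eq_or_ne a 0 with rfl | ha
  · simp
  rw [Submodule.starProjection_singleton, norm_smul, norm_div, RCLike.norm_ofReal,
    abs_of_nonneg (by positivity)]
  field_simp

theorem norm_ofReal_mul_inner_add_inner_mul_inner_le {t : ℝ} (ht : 0 ≤ t) (u v w : E) :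
    ‖(t : 𝕜) * ⟪v, w⟫_𝕜 + ⟪v, u⟫_𝕜 * ⟪u, w⟫_𝕜‖
      ≤ √(t * ‖v‖ ^ 2 + ‖⟪u, v⟫_𝕜‖ ^ 2) * √(t * ‖w‖ ^ 2 + ‖⟪u, w⟫_𝕜‖ ^ 2) :=
  calc ‖(t : 𝕜) * ⟪v, w⟫_𝕜 + ⟪v, u⟫_𝕜 * ⟪u, w⟫_𝕜‖
      ≤ t * (‖v‖ * ‖w‖) + ‖⟪u, v⟫_𝕜‖ * ‖⟪u, w⟫_𝕜‖ := by
        refine (norm_add_le _ _).trans ?_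
        rw [norm_mul, norm_mul, RCLike.norm_ofReal, abs_of_nonneg ht, norm_inner_symm v u]
        gcongr
        exact norm_inner_le_norm v w
    _ ≤ _ := Real.mul_mul_add_mul_le_sqrt_mul_sqrt ht _ _ _ _

end RCLike

section Mobius

variable {E : Type*} [NormedAddCommGroup E] [InnerProductSpace ℂ E]

theorem one_sub_inner_ne_zero {a x : E} (ha : ‖a‖ ≤ 1) (hx : ‖x‖ < 1) :
    (1 : ℂ) - ⟪a, x⟫ ≠ 0 := by
  have hlt : ‖⟪a, x⟫‖ < 1 :=
    (norm_inner_le_norm a x).trans_lt (mul_lt_one_of_nonneg_of_lt_one_right ha (norm_nonneg x) hx)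
  rw [sub_ne_zero]
  rintro h
  simp [← h] at hlt

theorem norm_one_sub_inner_comm (x y : E) : ‖(1 : ℂ) - ⟪y, x⟫‖ = ‖(1 : ℂ) - ⟪x, y⟫‖ := by
  rw [← inner_conj_symm, ← Complex.norm_conj, map_sub, map_one, Complex.conj_conj]

theorem norm_sq_mobius {a : E} (ha : ‖a‖ ≤ 1) (x : E) :
    ‖mobius a x‖ ^ 2
      = ((1 - ‖a‖ ^ 2) * ‖a - x‖ ^ 2 + ‖⟪a, a - x⟫‖ ^ 2) / ‖1 - ⟪a, x⟫‖ ^ 2 := by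
  rcases eq_or_ne a 0 with rfl | ha₀
  · simp [mobius]
  set m : E := ((1 : ℂ) - ⟪a, x⟫)⁻¹ • (a - x)
  set p : E := (ℂ ∙ a).starProjection m
  have hmob : mobius a x = (√(1 - ‖a‖ ^ 2) : ℂ) • (m - p) + p := by
    simp only [mobius, if_neg ha₀, p, Submodule.starProjection_singleton]
    push_cast
    rfl
  have hp : ‖a‖ ^ 2 * ‖p‖ ^ 2 = ‖⟪a, m⟫‖ ^ 2 := by
    rw [← mul_pow, Submodule.norm_mul_norm_starProjection_singleton]
  rw [hmob, ← Complex.coe_algebraMap, Submodule.norm_sq_smul_sub_starProjection_add,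
    Real.sq_sqrt (by nlinarith [norm_nonneg a]), sub_sub_cancel, hp]
  simp only [m, inner_smul_right, norm_smul, norm_mul, norm_inv]
  ring

theorem rhoE_sq_mul_norm_one_sub_inner_sq {a x : E} (ha : ‖a‖ ≤ 1) (hx : ‖x‖ < 1) :
    rhoE a x ^ 2 * ‖1 - ⟪a, x⟫‖ ^ 2 = (1 - ‖a‖ ^ 2) * ‖a - x‖ ^ 2 + ‖⟪a, a - x⟫‖ ^ 2 := by
  have hN : ‖(1 : ℂ) - ⟪a, x⟫‖ ^ 2 ≠ 0 := by
    simpa using one_sub_inner_ne_zero ha hx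
  rw [rhoE, norm_sq_mobius ha, div_mul_cancel₀ _ hN]

theorem norm_one_sub_inner_sq_mul_one_sub_rhoE_sq {a x : E} (ha : ‖a‖ ≤ 1) (hx : ‖x‖ < 1) :
    ‖1 - ⟪a, x⟫‖ ^ 2 * (1 - rhoE a x ^ 2) = (1 - ‖a‖ ^ 2) * (1 - ‖x‖ ^ 2) := by
  have hρ := rhoE_sq_mul_norm_one_sub_inner_sq ha hx
  have hinner : ⟪a, a - x⟫ = ((‖a‖ ^ 2 : ℝ) : ℂ) - ⟪a, x⟫ := by
    rw [inner_sub_right, inner_self_eq_norm_sq_to_K]; push_cast; rfl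
  have h1 := Complex.norm_ofReal_sub_sq 1 ⟪a, x⟫
  rw [Complex.ofReal_one] at h1
  rw [hinner, Complex.norm_ofReal_sub_sq, norm_sub_sq (𝕜 := ℂ) a x, h1] at hρ
  rw [h1]
  linear_combination -hρ

theorem rhoE_comm {x y : E} (hx : ‖x‖ < 1) (hy : ‖y‖ < 1) : rhoE x y = rhoE y x := by
  have hxy := norm_one_sub_inner_sq_mul_one_sub_rhoE_sq hx.le hy
  have hyx := norm_one_sub_inner_sq_mul_one_sub_rhoE_sq hy.le hx
  rw [norm_one_sub_inner_comm, mul_comm (1 - ‖y‖ ^ 2), ← hxy] at hyx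
  have hN : ‖(1 : ℂ) - ⟪x, y⟫‖ ^ 2 ≠ 0 := by
    simpa using one_sub_inner_ne_zero hx.le hy
  have hsq : rhoE x y ^ 2 = rhoE y x ^ 2 := by
    linarith [mul_left_cancel₀ hN hyx]
  exact (sq_eq_sq₀ (norm_nonneg _) (norm_nonneg _)).1 hsq

theorem one_sub_norm_sq_mul_norm_one_sub_inner_le {u x y : E} (hu : ‖u‖ ≤ 1) (hx : ‖x‖ < 1)
    (hy : ‖y‖ < 1) :
    (1 - ‖u‖ ^ 2) * ‖1 - ⟪x, y⟫‖
      ≤ ‖1 - ⟪u, x⟫‖ * ‖1 - ⟪u, y⟫‖ * (1 + rhoE u x * rhoE u y) := by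
  have hu' : 0 ≤ 1 - ‖u‖ ^ 2 := by nlinarith [norm_nonneg u]
  have hdecomp : ((1 - ‖u‖ ^ 2 : ℝ) : ℂ) * (1 - ⟪x, y⟫) = (1 - ⟪x, u⟫) * (1 - ⟪u, y⟫)
      - (((1 - ‖u‖ ^ 2 : ℝ) : ℂ) * ⟪u - x, u - y⟫ + ⟪u - x, u⟫ * ⟪u, u - y⟫) := by
    simp only [inner_sub_left, inner_sub_right, inner_self_eq_norm_sq_to_K, Complex.coe_algebraMap]
    push_cast
    ring
  have hρ : ∀ {z : E}, ‖z‖ < 1 →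
      rhoE u z * ‖1 - ⟪u, z⟫‖ = √((1 - ‖u‖ ^ 2) * ‖u - z‖ ^ 2 + ‖⟪u, u - z⟫‖ ^ 2) := by
    intro z hz
    rw [← rhoE_sq_mul_norm_one_sub_inner_sq hu hz, ← mul_pow]
    exact (Real.sqrt_sq (mul_nonneg (norm_nonneg _) (norm_nonneg _))).symm
  calc (1 - ‖u‖ ^ 2) * ‖1 - ⟪x, y⟫‖ = ‖((1 - ‖u‖ ^ 2 : ℝ) : ℂ) * (1 - ⟪x, y⟫)‖ := by
        rw [norm_mul, Complex.norm_real, Real.norm_of_nonneg hu']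
    _ ≤ ‖(1 - ⟪x, u⟫) * (1 - ⟪u, y⟫)‖
          + ‖((1 - ‖u‖ ^ 2 : ℝ) : ℂ) * ⟪u - x, u - y⟫ + ⟪u - x, u⟫ * ⟪u, u - y⟫‖ :=
        hdecomp ▸ norm_sub_le _ _
    _ ≤ ‖1 - ⟪u, x⟫‖ * ‖1 - ⟪u, y⟫‖
          + rhoE u x * ‖1 - ⟪u, x⟫‖ * (rhoE u y * ‖1 - ⟪u, y⟫‖) := by
        rw [norm_mul, norm_one_sub_inner_comm, hρ hx, hρ hy]
        gcongr
        exact norm_ofReal_mul_inner_add_inner_mul_inner_le hu' _ _ _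
    _ = ‖1 - ⟪u, x⟫‖ * ‖1 - ⟪u, y⟫‖ * (1 + rhoE u x * rhoE u y) := by ring

end Mobius

/-- Sharpened triangle inequality for the pseudo-hyperbolic metric:
`ρ_E(x,y) ≤ (ρ_E(x,u) + ρ_E(u,y))/(1 + ρ_E(x,u)ρ_E(u,y))`. -/
theorem rhoE_triangle {E : Type*} [NormedAddCommGroup E] [InnerProductSpace ℂ E]
    (x u y : E) (hx : ‖x‖ < 1) (hu : ‖u‖ < 1) (hy : ‖y‖ < 1) :
    rhoE x y ≤ (rhoE x u + rhoE u y) / (1 + rhoE x u * rhoE u y) := by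
  rw [rhoE_comm hx hu]
  have hux := norm_one_sub_inner_sq_mul_one_sub_rhoE_sq hu.le hx
  have huy := norm_one_sub_inner_sq_mul_one_sub_rhoE_sq hu.le hy
  have hxy := norm_one_sub_inner_sq_mul_one_sub_rhoE_sq hx.le hy
  have key := one_sub_norm_sq_mul_norm_one_sub_inner_le hu.le hx hy
  have hDx : 0 ≤ 1 - ‖x‖ ^ 2 := by nlinarith [norm_nonneg x]
  have hDu : 0 ≤ 1 - ‖u‖ ^ 2 := by nlinarith [norm_nonneg u]
  have hDy : 0 ≤ 1 - ‖y‖ ^ 2 := by nlinarith [norm_nonneg y]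
  have hN : 0 < ‖1 - ⟪u, x⟫‖ * ‖1 - ⟪u, y⟫‖ * ‖1 - ⟪x, y⟫‖ := by
    have := one_sub_inner_ne_zero hu.le hx
    have := one_sub_inner_ne_zero hu.le hy
    have := one_sub_inner_ne_zero hx.le hy
    positivity
  refine le_add_div_one_add_mul (norm_nonneg _) (norm_nonneg _) ?_
  refine le_of_mul_le_mul_left ?_ (pow_pos hN 2)
  calc _ = (1 - ‖x‖ ^ 2) * (1 - ‖y‖ ^ 2) * ((1 - ‖u‖ ^ 2) * ‖1 - ⟪x, y⟫‖) ^ 2 := by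
        linear_combination ‖1 - ⟪x, y⟫‖ ^ 2 * ‖1 - ⟪u, y⟫‖ ^ 2 * (1 - rhoE u y ^ 2) * hux
          + ‖1 - ⟪x, y⟫‖ ^ 2 * (1 - ‖u‖ ^ 2) * (1 - ‖x‖ ^ 2) * huy
    _ ≤ (1 - ‖x‖ ^ 2) * (1 - ‖y‖ ^ 2)
          * (‖1 - ⟪u, x⟫‖ * ‖1 - ⟪u, y⟫‖ * (1 + rhoE u x * rhoE u y)) ^ 2 := by
        gcongr
    _ = _ := by
        linear_combination (-(‖1 - ⟪u, x⟫‖ * ‖1 - ⟪u, y⟫‖ * (1 + rhoE u x * rhoE u y)) ^ 2) * hxy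
end

section
/- Let φ: B_E → B_E be an analytic map on the open unit ball of a complex Hilbert space, and let Rφ(y) = φ'(y)(y) denote the radial derivative. Then for every y ∈ B_E one has |⟨Rφ(y), φ(y)⟩| ≤ ‖y‖·‖φ(y)‖·(1 − ‖φ(y)‖²)/(1 − ‖y‖²). -/
/-!
Restrict `φ` to the complex line through `y` and pair with the unit vector `w = φ y / ‖φ y‖`:
`h λ = ⟪w, φ (λ • y / ‖y‖)⟫` is a holomorphic self-map of the unit disc with `h ‖y‖ = ‖φ y‖`
and `h' ‖y‖ = ⟪φ y, Rφ(y)⟫ / (‖y‖ ‖φ y‖)`. The claim is then the Schwarz–Pick inequality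
`|h' a| (1 - |a|²) ≤ 1 - |h a|²`, which follows from the Schwarz lemma applied to
`h` composed on both sides with the disc automorphisms `z ↦ (z + a) / (1 + ā z)`.
-/

open scoped ComplexInnerProductSpace ComplexConjugate
open Metric Set

namespace Complex

noncomputable def diskMobius (a z : ℂ) : ℂ := (z + a) / (1 + conj a * z)

theorem one_add_conj_mul_ne_zero {a z : ℂ} (ha : ‖a‖ < 1) (hz : ‖z‖ < 1) :
    1 + conj a * z ≠ 0 := by
  intro h
  have : ‖conj a * z‖ = 1 := by rw [eq_neg_of_add_eq_zero_right h, norm_neg, norm_one]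
  rw [norm_mul, norm_conj] at this
  nlinarith [norm_nonneg a, norm_nonneg z]

theorem sq_norm_one_add_conj_mul_sub_sq_norm_add (a z : ℂ) :
    ‖1 + conj a * z‖ ^ 2 - ‖z + a‖ ^ 2 = (1 - ‖a‖ ^ 2) * (1 - ‖z‖ ^ 2) := by
  simp only [← normSq_eq_norm_sq, normSq_apply, add_re, add_im, mul_re, mul_im, conj_re,
    conj_im, one_re, one_im]
  ring

theorem mapsTo_diskMobius {a : ℂ} (ha : ‖a‖ < 1) :
    MapsTo (diskMobius a) (ball 0 1) (ball 0 1) := by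
  intro z hz
  rw [mem_ball_zero_iff] at hz ⊢
  have hden := norm_pos_iff.2 (one_add_conj_mul_ne_zero ha hz)
  have := sq_norm_one_add_conj_mul_sub_sq_norm_add a z
  rw [diskMobius, norm_div, div_lt_one hden]
  have hpos : 0 < (1 - ‖a‖ ^ 2) * (1 - ‖z‖ ^ 2) := by
    apply mul_pos <;> nlinarith [norm_nonneg a, norm_nonneg z]
  nlinarith [norm_nonneg (z + a)]

theorem hasDerivAt_diskMobius {a z : ℂ} (hz : 1 + conj a * z ≠ 0) :
    HasDerivAt (diskMobius a) ((1 - ‖a‖ ^ 2) / (1 + conj a * z) ^ 2) z := by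
  refine (((hasDerivAt_id z).add_const a).div
    (((hasDerivAt_id z).const_mul (conj a)).const_add 1) hz).congr_deriv ?_
  rw [← conj_mul']
  simp only [id]
  ring

theorem differentiableOn_diskMobius {a : ℂ} (ha : ‖a‖ < 1) :
    DifferentiableOn ℂ (diskMobius a) (ball 0 1) := fun _z hz ↦
  (hasDerivAt_diskMobius (one_add_conj_mul_ne_zero ha (mem_ball_zero_iff.1 hz)))
    |>.differentiableAt.differentiableWithinAt

@[simp]
theorem diskMobius_zero (a : ℂ) : diskMobius a 0 = a := by simp [diskMobius]

@[simp]
theorem diskMobius_neg_self (b : ℂ) : diskMobius (-b) b = 0 := by simp [diskMobius]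

theorem hasDerivAt_diskMobius_zero (a : ℂ) : HasDerivAt (diskMobius a) (1 - ‖a‖ ^ 2) 0 := by
  simpa using hasDerivAt_diskMobius (a := a) (z := 0) (by simp)

theorem hasDerivAt_diskMobius_neg_self {b : ℂ} (hb : ‖b‖ < 1) :
    HasDerivAt (diskMobius (-b)) (1 - ‖b‖ ^ 2)⁻¹ b := by
  have hconj : 1 + conj (-b) * b = 1 - ‖b‖ ^ 2 := by
    rw [map_neg, neg_mul, conj_mul', sub_eq_add_neg]
  have hden : 1 + conj (-b) * b ≠ 0 := one_add_conj_mul_ne_zero (by rwa [norm_neg]) hb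
  refine (hasDerivAt_diskMobius hden).congr_deriv ?_
  rw [hconj] at hden ⊢
  rw [norm_neg]
  field_simp

theorem norm_one_sub_sq_norm {z : ℂ} (hz : ‖z‖ ≤ 1) : ‖1 - (‖z‖ : ℂ) ^ 2‖ = 1 - ‖z‖ ^ 2 := by
  rw [← ofReal_pow, ← ofReal_one, ← ofReal_sub, norm_real, Real.norm_of_nonneg]
  nlinarith [norm_nonneg z]

theorem norm_deriv_mul_one_sub_sq_le_of_mapsTo_ball {f : ℂ → ℂ} {a : ℂ}
    (hd : DifferentiableOn ℂ f (ball 0 1)) (hf : MapsTo f (ball 0 1) (ball 0 1))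
    (ha : ‖a‖ < 1) :
    ‖deriv f a‖ * (1 - ‖a‖ ^ 2) ≤ 1 - ‖f a‖ ^ 2 := by
  have ha' : a ∈ ball (0 : ℂ) 1 := mem_ball_zero_iff.2 ha
  have hb : ‖f a‖ < 1 := mem_ball_zero_iff.1 (hf ha')
  have hb' : ‖-f a‖ < 1 := by rwa [norm_neg]
  set g := diskMobius (-f a) ∘ f ∘ diskMobius a
  have hgd : DifferentiableOn ℂ g (ball 0 1) :=
    (differentiableOn_diskMobius hb').comp (hd.comp (differentiableOn_diskMobius ha)
      (mapsTo_diskMobius ha)) (hf.comp (mapsTo_diskMobius ha))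
  have hgmaps : MapsTo g (ball 0 1) (closedBall (g 0) 1) := by
    simpa [g] using ((mapsTo_diskMobius hb').comp (hf.comp (mapsTo_diskMobius ha))).mono_right
      ball_subset_closedBall
  have hg' : HasDerivAt g ((1 - (‖f a‖ : ℂ) ^ 2)⁻¹ * (deriv f a * (1 - (‖a‖ : ℂ) ^ 2))) 0 := by
    have hfa := (hd.differentiableAt (isOpen_ball.mem_nhds ha')).hasDerivAt
    exact (hasDerivAt_diskMobius_neg_self hb).comp_of_eq 0
      (hfa.comp_of_eq 0 (hasDerivAt_diskMobius_zero a) (diskMobius_zero a).symm) (by simp)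
  have hle := norm_deriv_le_one_of_mapsTo_ball hgd hgmaps one_pos
  rwa [hg'.deriv, norm_mul, norm_mul, norm_inv, norm_one_sub_sq_norm ha.le,
    norm_one_sub_sq_norm hb.le, inv_mul_le_one₀ (by nlinarith [norm_nonneg (f a)])] at hle

end Complex

section Slice

variable {E : Type*} [NormedAddCommGroup E] [InnerProductSpace ℂ E] {φ : E → E} {u w : E}

theorem mapsTo_inner_apply_smul (hmap : MapsTo φ (ball 0 1) (ball 0 1)) (hu : ‖u‖ ≤ 1)
    (hw : ‖w‖ ≤ 1) : MapsTo (fun z : ℂ ↦ ⟪w, φ (z • u)⟫) (ball 0 1) (ball 0 1) := by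
  intro z hz
  rw [mem_ball_zero_iff] at hz ⊢
  have hzu : z • u ∈ ball (0 : E) 1 := by
    rw [mem_ball_zero_iff, norm_smul]
    nlinarith [norm_nonneg z, norm_nonneg u]
  have := mem_ball_zero_iff.1 (hmap hzu)
  calc ‖⟪w, φ (z • u)⟫‖ ≤ ‖w‖ * ‖φ (z • u)‖ := norm_inner_le_norm _ _
    _ < 1 := by nlinarith [norm_nonneg w, norm_nonneg (φ (z • u))]

theorem hasDerivAt_inner_apply_smul {z : ℂ} (hφ : DifferentiableAt ℂ φ (z • u)) :
    HasDerivAt (fun z : ℂ ↦ ⟪w, φ (z • u)⟫) ⟪w, fderiv ℂ φ (z • u) u⟫ z := by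
  have hsmul : HasDerivAt (fun z : ℂ ↦ z • u) u z := by
    simpa using (hasDerivAt_id z).smul_const u
  exact (innerSL ℂ w).hasFDerivAt.comp_hasDerivAt z (hφ.hasFDerivAt.comp_hasDerivAt z hsmul)

theorem norm_inner_fderiv_smul_mul_one_sub_sq_le (hφ : DifferentiableOn ℂ φ (ball 0 1))
    (hmap : MapsTo φ (ball 0 1) (ball 0 1)) (hu : ‖u‖ ≤ 1) (hw : ‖w‖ ≤ 1) {z : ℂ}
    (hz : ‖z‖ < 1) :
    ‖⟪w, fderiv ℂ φ (z • u) u⟫‖ * (1 - ‖z‖ ^ 2) ≤ 1 - ‖⟪w, φ (z • u)⟫‖ ^ 2 := by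
  have hdiff : ∀ z : ℂ, ‖z‖ < 1 → DifferentiableAt ℂ φ (z • u) := fun z hz ↦
    hφ.differentiableAt <| isOpen_ball.mem_nhds <| by
      rw [mem_ball_zero_iff, norm_smul]
      nlinarith [norm_nonneg z, norm_nonneg u]
  have hslice : DifferentiableOn ℂ (fun z : ℂ ↦ ⟪w, φ (z • u)⟫) (ball 0 1) := fun z hz ↦
    (hasDerivAt_inner_apply_smul (hdiff z (mem_ball_zero_iff.1 hz))).differentiableAt
      |>.differentiableWithinAt
  have := Complex.norm_deriv_mul_one_sub_sq_le_of_mapsTo_ball hslice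
    (mapsTo_inner_apply_smul hmap hu hw) hz
  rwa [(hasDerivAt_inner_apply_smul (hdiff z hz)).deriv] at this

end Slice

theorem abs_inner_radialDeriv_le_general {E : Type*} [NormedAddCommGroup E]
    [InnerProductSpace ℂ E]
    (φ : E → E) (hφ : AnalyticOnNhd ℂ φ (Metric.ball 0 1))
    (hmap : Set.MapsTo φ (Metric.ball (0 : E) 1) (Metric.ball (0 : E) 1))
    (y : E) (hy : ‖y‖ < 1) :
    ‖⟪φ y, fderiv ℂ φ y y⟫‖ ≤
      ‖y‖ * ‖φ y‖ * ((1 - ‖φ y‖ ^ 2) / (1 - ‖y‖ ^ 2)) := by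
  rcases eq_or_ne y 0 with rfl | hy0
  · simp
  rcases eq_or_ne (φ y) 0 with hφy | hφy
  · simp [hφy]
  have hr : 0 < ‖y‖ := norm_pos_iff.2 hy0
  have hunit : ∀ x : E, x ≠ 0 → ‖(‖x‖⁻¹ : ℂ) • x‖ = 1 := fun x hx ↦ by
    simp [norm_smul, norm_ne_zero_iff.2 hx]
  have hry : (‖y‖ : ℂ) • (‖y‖⁻¹ : ℂ) • y = y := by
    rw [smul_smul, mul_inv_cancel₀ (by exact_mod_cast hr.ne'), one_smul]
  have key := norm_inner_fderiv_smul_mul_one_sub_sq_le hφ.differentiableOn hmap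
    (hunit y hy0).le (hunit (φ y) hφy).le (z := ‖y‖) (by simpa using hy)
  rw [hry] at key
  have hderiv : ‖⟪(‖φ y‖⁻¹ : ℂ) • φ y, fderiv ℂ φ y ((‖y‖⁻¹ : ℂ) • y)⟫‖ =
      ‖⟪φ y, fderiv ℂ φ y y⟫‖ / (‖y‖ * ‖φ y‖) := by
    simp only [map_smul, inner_smul_left, inner_smul_right, norm_mul, Complex.norm_conj,
      norm_inv, Complex.norm_real, norm_norm]
    field_simp
  have hval : ‖⟪(‖φ y‖⁻¹ : ℂ) • φ y, φ y⟫‖ = ‖φ y‖ := by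
    simp only [inner_smul_left, inner_self_eq_norm_sq_to_K, Complex.coe_algebraMap, norm_mul,
      Complex.norm_conj, norm_inv, norm_pow, Complex.norm_real, norm_norm]
    field_simp
  rw [hderiv, hval, Complex.norm_real, Real.norm_of_nonneg hr.le, div_mul_eq_mul_div,
    div_le_iff₀ (by positivity)] at key
  rw [mul_div_assoc', le_div_iff₀ (by nlinarith)]
  linarith

/-- Schwarz–Pick estimate: for an analytic self-map `φ` of the unit ball of a complex
Hilbert space, with radial derivative `Rφ(y) = φ'(y)(y)`, one has
`|⟨Rφ(y), φ(y)⟩| ≤ ‖y‖‖φ(y)‖(1-‖φ(y)‖²)/(1-‖y‖²)`.  (The paper's inner product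
`⟨a,b⟩` is linear in the first variable, i.e. it is Mathlib's `⟪b, a⟫`.) -/
theorem abs_inner_radialDeriv_le {E : Type*} [NormedAddCommGroup E]
    [InnerProductSpace ℂ E] [CompleteSpace E]
    (φ : E → E) (hφ : AnalyticOnNhd ℂ φ (Metric.ball 0 1))
    (hmap : Set.MapsTo φ (Metric.ball (0 : E) 1) (Metric.ball (0 : E) 1))
    (y : E) (hy : ‖y‖ < 1) :
    ‖⟪φ y, fderiv ℂ φ y y⟫‖ ≤
      ‖y‖ * ‖φ y‖ * ((1 - ‖φ y‖ ^ 2) / (1 - ‖y‖ ^ 2)) :=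
  abs_inner_radialDeriv_le_general φ hφ hmap y hy
end

section
/- Let φ: B_E → B_E be an analytic map on the open unit ball of a complex Hilbert space. Then the radial derivative satisfies ‖Rφ(y)‖ ≤ 2·√(1 − ‖φ(y)‖²)/(1 − ‖y‖²) for every y ∈ B_E. -/
/-!
For `a` in the unit ball, `x ↦ (1 - ⟪a, x⟫)⁻¹ • (x - a)` vanishes at `a`, has derivative
`(1 - ‖a‖²)⁻¹` there, and maps the unit ball into the ball of radius `(1 - ‖a‖²)^(-1/2)`.
Composing it with a holomorphic map `g` from a disc of radius `R` into the unit ball and applying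
the Schwarz lemma gives `‖g'(c)‖ ≤ √(1 - ‖g c‖²) / R`. For `g z = φ (z • y)` on the disc of radius
`1 - ‖y‖` about `1` this reads `‖Rφ(y)‖ ≤ √(1 - ‖φ y‖²) / (1 - ‖y‖)`, and `1 + ‖y‖ ≤ 2`.
-/

open Metric Set
open scoped ComplexInnerProductSpace InnerProductSpace

theorem sqrt_one_sub_sq_norm_mul_norm_sub_le {𝕜 E : Type*} [RCLike 𝕜] [NormedAddCommGroup E]
    [InnerProductSpace 𝕜 E] {a x : E} (ha : ‖a‖ ≤ 1) (hx : ‖x‖ ≤ 1) :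
    √(1 - ‖a‖ ^ 2) * ‖x - a‖ ≤ ‖1 - ⟪a, x⟫_𝕜‖ := by
  have hexpand : ‖1 - ⟪a, x⟫_𝕜‖ ^ 2 = (1 - ‖a‖ ^ 2) * ‖x - a‖ ^ 2
      + (1 - ‖a‖ ^ 2) * (1 - ‖x‖ ^ 2) + ‖⟪a, x⟫_𝕜 - (‖a‖ ^ 2 : 𝕜)‖ ^ 2 := by
    rw [norm_sub_sq (𝕜 := 𝕜) x a, ← inner_conj_symm x a]
    simp only [RCLike.norm_sq_eq_def, map_sub, RCLike.one_re, RCLike.one_im,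
      ← RCLike.ofReal_pow, RCLike.ofReal_re, RCLike.ofReal_im, RCLike.conj_re]
    ring
  have hax : 0 ≤ (1 - ‖a‖ ^ 2) * (1 - ‖x‖ ^ 2) := by
    apply mul_nonneg <;> nlinarith [norm_nonneg a, norm_nonneg x]
  refine (pow_le_pow_iff_left₀ (by positivity) (norm_nonneg _) two_ne_zero).mp ?_
  rw [mul_pow, Real.sq_sqrt (by nlinarith [norm_nonneg a])]
  nlinarith [sq_nonneg ‖⟪a, x⟫_𝕜 - (‖a‖ ^ 2 : 𝕜)‖]

theorem norm_deriv_le_sqrt_div_of_mapsTo_ball {E : Type*} [NormedAddCommGroup E]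
    [InnerProductSpace ℂ E] {g : ℂ → E} {c : ℂ} {R : ℝ}
    (hg : DifferentiableOn ℂ g (ball c R)) (hmaps : MapsTo g (ball c R) (ball 0 1))
    (hR : 0 < R) : ‖deriv g c‖ ≤ √(1 - ‖g c‖ ^ 2) / R := by
  set a := g c
  have hc : c ∈ ball c R := mem_ball_self hR
  have ha : ‖a‖ < 1 := mem_ball_zero_iff.mp (hmaps hc)
  have hs : 0 < 1 - ‖a‖ ^ 2 := by nlinarith [norm_nonneg a]
  have hden : ∀ z ∈ ball c R, 1 - ⟪a, g z⟫ ≠ 0 := by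
    intro z hz h
    have hlt : ‖⟪a, g z⟫‖ < 1 := (norm_inner_le_norm a (g z)).trans_lt
      (mul_lt_one_of_nonneg_of_lt_one_left (norm_nonneg a) ha (mem_ball_zero_iff.mp (hmaps hz)).le)
    rw [← sub_eq_zero.mp h, norm_one] at hlt
    exact lt_irrefl _ hlt
  set f : ℂ → E := fun z => (1 - ⟪a, g z⟫)⁻¹ • (g z - a)
  have hf : DifferentiableOn ℂ f (ball c R) :=
    ((((innerSL ℂ a).differentiable.comp_differentiableOn hg).const_sub 1).inv hden).smul
      (hg.sub_const a)
  have hfmaps : MapsTo f (ball c R) (closedBall (f c) (√(1 - ‖a‖ ^ 2))⁻¹) := by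
    intro z hz
    rw [mem_closedBall, show f c = 0 by simp [f, a], dist_zero_right, norm_smul, norm_inv,
      inv_mul_le_iff₀ (norm_pos_iff.mpr (hden z hz)), le_mul_inv_iff₀ (by positivity), mul_comm]
    exact sqrt_one_sub_sq_norm_mul_norm_sub_le ha.le (mem_ball_zero_iff.mp (hmaps hz)).le
  have hf' : deriv f c = ((1 - ‖a‖ ^ 2 : ℝ) : ℂ)⁻¹ • deriv g c := by
    have hgc := (hg.differentiableAt (isOpen_ball.mem_nhds hc)).hasDerivAt
    have hden' : HasDerivAt (fun z => 1 - ⟪a, g z⟫) (-⟪a, deriv g c⟫) c := by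
      simpa using ((innerSL ℂ a).hasFDerivAt.comp_hasDerivAt c hgc).const_sub 1
    refine ((hden'.inv (hden c hc)).smul (hgc.sub_const a)).deriv.trans ?_
    simp [a, inner_self_eq_norm_sq_to_K]
  have hschwarz := Complex.norm_deriv_le_div_of_mapsTo_ball hf hfmaps hR
  rw [hf', norm_smul, norm_inv, Complex.norm_real, Real.norm_of_nonneg hs.le] at hschwarz
  calc ‖deriv g c‖ = (1 - ‖a‖ ^ 2) * ((1 - ‖a‖ ^ 2)⁻¹ * ‖deriv g c‖) := by field_simp
    _ ≤ (1 - ‖a‖ ^ 2) * ((√(1 - ‖a‖ ^ 2))⁻¹ / R) := by gcongr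
    _ = √(1 - ‖a‖ ^ 2) / R := by
      field_simp
      rw [Real.sq_sqrt hs.le]

theorem mapsTo_smul_ball_one_sub_norm {E : Type*} [NormedAddCommGroup E] [NormedSpace ℂ E]
    {y : E} (hy : ‖y‖ < 1) : MapsTo (fun z : ℂ => z • y) (ball 1 (1 - ‖y‖)) (ball 0 1) := by
  intro z hz
  have hz' : ‖z‖ < 2 - ‖y‖ := by
    have := norm_le_norm_add_norm_sub' z 1
    rw [mem_ball, dist_eq_norm] at hz
    rw [norm_one] at this
    linarith
  rw [mem_ball_zero_iff, norm_smul]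
  nlinarith [norm_nonneg z, norm_nonneg y]

theorem norm_radialDeriv_le_general {E : Type*} [NormedAddCommGroup E]
    [InnerProductSpace ℂ E]
    (φ : E → E) (hφ : AnalyticOnNhd ℂ φ (Metric.ball 0 1))
    (hmap : Set.MapsTo φ (Metric.ball (0 : E) 1) (Metric.ball (0 : E) 1))
    (y : E) (hy : ‖y‖ < 1) :
    ‖fderiv ℂ φ y y‖ ≤ 2 * Real.sqrt (1 - ‖φ y‖ ^ 2) / (1 - ‖y‖ ^ 2) := by
  have hR : 0 < 1 - ‖y‖ := sub_pos.mpr hy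
  have hline := mapsTo_smul_ball_one_sub_norm hy
  have hderiv : deriv (φ ∘ fun z : ℂ => z • y) 1 = fderiv ℂ φ y y := by
    have hφy := (hφ y (mem_ball_zero_iff.mpr hy)).differentiableAt.hasFDerivAt
    have hlineDeriv : HasDerivAt (fun z : ℂ => z • y) y 1 := by
      simpa using (hasDerivAt_id (1 : ℂ)).smul_const y
    exact (hφy.comp_hasDerivAt_of_eq (1 : ℂ) hlineDeriv (one_smul ℂ y).symm).deriv
  have hbound := norm_deriv_le_sqrt_div_of_mapsTo_ball
    (hφ.differentiableOn.comp (by fun_prop) hline) (hmap.comp hline) hR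
  rw [hderiv, Function.comp_apply, one_smul] at hbound
  refine hbound.trans ?_
  rw [div_le_div_iff₀ hR (by nlinarith [norm_nonneg y])]
  nlinarith [mul_nonneg (Real.sqrt_nonneg (1 - ‖φ y‖ ^ 2)) (sq_nonneg (1 - ‖y‖))]

/-- Schwarz–Pick estimate for the radial derivative: for an analytic self-map `φ` of the
unit ball of a complex Hilbert space, `‖Rφ(y)‖ ≤ 2√(1-‖φ(y)‖²)/(1-‖y‖²)`. -/
theorem norm_radialDeriv_le {E : Type*} [NormedAddCommGroup E]
    [InnerProductSpace ℂ E] [CompleteSpace E]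
    (φ : E → E) (hφ : AnalyticOnNhd ℂ φ (Metric.ball 0 1))
    (hmap : Set.MapsTo φ (Metric.ball (0 : E) 1) (Metric.ball (0 : E) 1))
    (y : E) (hy : ‖y‖ < 1) :
    ‖fderiv ℂ φ y y‖ ≤ 2 * Real.sqrt (1 - ‖φ y‖ ^ 2) / (1 - ‖y‖ ^ 2) :=
  norm_radialDeriv_le_general φ hφ hmap y hy
end

section
/- Let φ: B_E → B_E be analytic with φ(z) ≠ 0 at a point z. Then there exists a unit vector η ∈ E with ⟨φ(z), η⟩ = 0 such that for ξ = φ(z) + √(1 − ‖φ(z)‖²)·η one has |⟨Rφ(z), ξ⟩| ≥ √(1 − ‖φ(z)‖²)·‖Rφ(z)‖ − (1 + √(1 − ‖φ(z)‖²)/‖φ(z)‖)·|⟨Rφ(z), φ(z)⟩|. -/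
open scoped ComplexInnerProductSpace

/-!
Write `v = φ(z)`, `w = Rφ(z)` and split `w = p + u` with `p` the orthogonal projection of `w`
onto `ℂ v` and `u ⟂ v`. Take `η = u / ‖u‖`, or any unit vector orthogonal to `v` when `u = 0`
(one exists since `dim E ≥ 2`). Then `⟪ξ, w⟫ = ⟪v, w⟫ + s‖u‖` with `s = √(1 - ‖v‖²) ≥ 0`, while
`‖w‖ ≤ ‖u‖ + ‖p‖ = ‖u‖ + |⟪v, w⟫| / ‖v‖`; the reverse triangle inequality combines the two.
-/

section

variable {𝕜 E : Type*} [RCLike 𝕜] [NormedAddCommGroup E] [InnerProductSpace 𝕜 E]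

local notation "⟪" x ", " y "⟫" => inner 𝕜 x y

theorem orthogonal_span_singleton_ne_bot (hdim : 2 ≤ Module.rank 𝕜 E) (v : E) :
    (𝕜 ∙ v)ᗮ ≠ ⊥ := by
  intro hbot
  have hrank : Module.rank 𝕜 (𝕜 ∙ v) ≤ 1 := by
    simpa using rank_span_le (R := 𝕜) ({v} : Set E)
  rw [Submodule.orthogonal_eq_bot_iff.mp hbot, rank_top] at hrank
  exact absurd (hdim.trans hrank) (by norm_num)

theorem inner_eq_inner_starProjection_of_mem {U : Submodule 𝕜 E} [U.HasOrthogonalProjection]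
    {η : E} (hη : η ∈ U) (w : E) : ⟪η, w⟫ = ⟪η, U.starProjection w⟫ := by
  rw [← U.inner_starProjection_left_eq_right, U.starProjection_eq_self_iff.mpr hη]

theorem exists_mem_norm_eq_one_inner_eq_norm_starProjection (U : Submodule 𝕜 E)
    [U.HasOrthogonalProjection] (hU : U ≠ ⊥) (w : E) :
    ∃ η ∈ U, ‖η‖ = 1 ∧ ⟪η, w⟫ = (‖U.starProjection w‖ : 𝕜) := by
  set u := U.starProjection w
  have hinner : ∀ η ∈ U, ⟪η, w⟫ = ⟪η, u⟫ := fun η hη ↦ inner_eq_inner_starProjection_of_mem hη w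
  by_cases hu : u = 0
  · obtain ⟨x, hxU, hx⟩ := U.exists_mem_ne_zero_of_ne_bot hU
    refine ⟨(‖x‖⁻¹ : 𝕜) • x, U.smul_mem _ hxU, norm_smul_inv_norm hx, ?_⟩
    rw [hinner _ (U.smul_mem _ hxU), hu, inner_zero_right, norm_zero, RCLike.ofReal_zero]
  · have huU : u ∈ U := U.starProjection_apply_mem w
    have hnu : (‖u‖ : 𝕜) ≠ 0 := by simpa using hu
    refine ⟨(‖u‖⁻¹ : 𝕜) • u, U.smul_mem _ huU, norm_smul_inv_norm hu, ?_⟩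
    rw [hinner _ (U.smul_mem _ huU), inner_smul_left, inner_self_eq_norm_sq_to_K, map_inv₀,
      RCLike.conj_ofReal]
    field_simp

theorem norm_starProjection_singleton (v w : E) :
    ‖(𝕜 ∙ v).starProjection w‖ = ‖⟪v, w⟫‖ / ‖v‖ := by
  rcases eq_or_ne v 0 with rfl | hv
  · simp [Submodule.span_zero_singleton 𝕜]
  have : ‖v‖ ≠ 0 := norm_ne_zero_iff.mpr hv
  rw [Submodule.starProjection_singleton, norm_smul, norm_div, RCLike.norm_ofReal,
    abs_of_nonneg (by positivity)]
  field_simp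

theorem norm_le_norm_starProjection_orthogonal_add (v w : E) :
    ‖w‖ ≤ ‖(𝕜 ∙ v)ᗮ.starProjection w‖ + ‖⟪v, w⟫‖ / ‖v‖ :=
  calc ‖w‖ = ‖(𝕜 ∙ v)ᗮ.starProjection w + (𝕜 ∙ v).starProjection w‖ := by
        rw [add_comm, Submodule.starProjection_add_starProjection_orthogonal]
    _ ≤ _ := by
        grw [norm_add_le, norm_starProjection_singleton]

theorem sub_le_norm_inner_add_smul {v w η : E} {s : ℝ} (hs : 0 ≤ s)
    (hη : ⟪η, w⟫ = (‖(𝕜 ∙ v)ᗮ.starProjection w‖ : 𝕜)) :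
    s * ‖w‖ - (1 + s / ‖v‖) * ‖⟪v, w⟫‖ ≤ ‖⟪v + (s : 𝕜) • η, w⟫‖ := by
  set r := ‖(𝕜 ∙ v)ᗮ.starProjection w‖
  have hexpand : ⟪v + (s : 𝕜) • η, w⟫ = ⟪v, w⟫ + ((s * r : ℝ) : 𝕜) := by
    rw [inner_add_left, inner_smul_left, RCLike.conj_ofReal, hη, RCLike.ofReal_mul]
  calc s * ‖w‖ - (1 + s / ‖v‖) * ‖⟪v, w⟫‖
      ≤ s * (r + ‖⟪v, w⟫‖ / ‖v‖) - (1 + s / ‖v‖) * ‖⟪v, w⟫‖ := by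
        grw [norm_le_norm_starProjection_orthogonal_add (𝕜 := 𝕜) v w]
    _ = ‖((s * r : ℝ) : 𝕜)‖ - ‖⟪v, w⟫‖ := by
        rw [RCLike.norm_ofReal, abs_of_nonneg (by positivity)]
        ring
    _ ≤ ‖⟪v + (s : 𝕜) • η, w⟫‖ := by
        rw [hexpand, add_comm]
        exact norm_sub_le_norm_add _ _

end

theorem exists_eta_lower_bound_general {E : Type*} [NormedAddCommGroup E]
    [InnerProductSpace ℂ E] (hdim : 2 ≤ Module.rank ℂ E)
    (φ : E → E)
    (z : E) :
    ∃ η : E, ‖η‖ = 1 ∧ ⟪η, φ z⟫ = 0 ∧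
      Real.sqrt (1 - ‖φ z‖ ^ 2) * ‖fderiv ℂ φ z z‖ -
          (1 + Real.sqrt (1 - ‖φ z‖ ^ 2) / ‖φ z‖) *
            ‖⟪φ z, fderiv ℂ φ z z⟫‖ ≤
        ‖⟪φ z + (Real.sqrt (1 - ‖φ z‖ ^ 2) : ℂ) • η, fderiv ℂ φ z z⟫‖ := by
  obtain ⟨η, hηv, hη1, hηw⟩ := exists_mem_norm_eq_one_inner_eq_norm_starProjection _
    (orthogonal_span_singleton_ne_bot hdim (φ z)) (fderiv ℂ φ z z)
  exact ⟨η, hη1, Submodule.mem_orthogonal_singleton_iff_inner_left.mp hηv,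
    sub_le_norm_inner_add_smul (Real.sqrt_nonneg _) hηw⟩

/-- For an analytic self-map `φ` of the unit ball of a complex Hilbert space of dimension
at least `2`, with `φ(z) ≠ 0` at a point `z` of the ball, there is a unit vector `η`
orthogonal to `φ(z)` such that, setting `ξ = φ(z) + √(1-‖φ(z)‖²)·η` and writing
`Rφ(z) = φ'(z)(z)` for the radial derivative,
`|⟨Rφ(z), ξ⟩| ≥ √(1-‖φ(z)‖²)‖Rφ(z)‖ - (1 + √(1-‖φ(z)‖²)/‖φ(z)‖)|⟨Rφ(z), φ(z)⟩|`. -/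
theorem exists_eta_lower_bound {E : Type*} [NormedAddCommGroup E]
    [InnerProductSpace ℂ E] [CompleteSpace E] (hdim : 2 ≤ Module.rank ℂ E)
    (φ : E → E) (hφ : AnalyticOnNhd ℂ φ (Metric.ball 0 1))
    (hmap : Set.MapsTo φ (Metric.ball (0 : E) 1) (Metric.ball (0 : E) 1))
    (z : E) (hz : ‖z‖ < 1) (hφz : φ z ≠ 0) :
    ∃ η : E, ‖η‖ = 1 ∧ ⟪η, φ z⟫ = 0 ∧
      Real.sqrt (1 - ‖φ z‖ ^ 2) * ‖fderiv ℂ φ z z‖ -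
          (1 + Real.sqrt (1 - ‖φ z‖ ^ 2) / ‖φ z‖) *
            ‖⟪φ z, fderiv ℂ φ z z⟫‖ ≤
        ‖⟪φ z + (Real.sqrt (1 - ‖φ z‖ ^ 2) : ℂ) • η, fderiv ℂ φ z z⟫‖ :=
  exists_eta_lower_bound_general hdim φ z
end

section
/- Let f: B_E → ℂ be analytic on the open unit ball of a complex Hilbert space and x ∈ B_E with x ≠ 0. Then the radial derivative satisfies the integral formula (1 − ‖x‖²)·f'(x)(x) = −(1/(2πi))·∮_{|ξ|=1} f(φ_x(ξx))·dξ/ξ², where φ_x is the Möbius automorphism of B_E. -/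
open scoped ComplexInnerProductSpace Classical

/-!
On the complex line through `x`, `φ_x` acts as `ξ x ↦ μ(ξ) x` with
`μ(ξ) = (1 - ξ) / (1 - ξ‖x‖²)`, and `‖x‖ ‖1 - ξ‖ < ‖1 - ξ‖x‖²‖` for `‖ξ‖ ≤ 1`, so
`g(ξ) = f(μ(ξ) x)` is holomorphic near the closed unit disc. The integral is then the Cauchy
formula for `2πi g'(0)`, and the chain rule gives `g'(0) = (‖x‖² - 1) f'(x)(x)` since `μ(0) = 1`
and `μ'(0) = ‖x‖² - 1`.
-/

open Complex Metric

lemma Complex.sq_norm_one_sub_mul_ofReal (ξ : ℂ) (t : ℝ) :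
    ‖1 - ξ * t‖ ^ 2 = t * ‖1 - ξ‖ ^ 2 + (1 - t) * (1 - t * ‖ξ‖ ^ 2) := by
  simp only [Complex.sq_norm, Complex.normSq_apply, sub_re, sub_im, one_re, one_im, mul_re,
    mul_im, ofReal_re, ofReal_im]
  ring

lemma Complex.mul_norm_one_sub_lt {ξ : ℂ} (hξ : ‖ξ‖ ≤ 1) {r : ℝ} (hr0 : 0 ≤ r) (hr1 : r < 1) :
    r * ‖1 - ξ‖ < ‖1 - ξ * (r : ℂ) ^ 2‖ := by
  have : r ^ 2 * ‖ξ‖ ^ 2 < 1 := by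
    rw [← mul_pow]
    exact pow_lt_one₀ (by positivity) (mul_lt_one_of_nonneg_of_lt_one_left hr0 hr1 hξ) two_ne_zero
  refine lt_of_pow_lt_pow_left₀ 2 (norm_nonneg _) ?_
  rw [mul_pow, ← ofReal_pow, sq_norm_one_sub_mul_ofReal]
  have := mul_pos (sub_pos.2 (pow_lt_one₀ hr0 hr1 two_ne_zero)) (sub_pos.2 this)
  linarith

lemma hasDerivAt_one_sub_div_one_sub_mul_zero (t : ℂ) :
    HasDerivAt (fun ξ : ℂ => (1 - ξ) / (1 - ξ * t)) (t - 1) 0 := by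
  have h := ((hasDerivAt_id' (0 : ℂ)).const_sub 1).div
    (((hasDerivAt_id' 0).mul_const t).const_sub 1) (by simp)
  exact h.congr_deriv (by ring)

-- Both sides vanish when `1 - ξ‖x‖² = 0`, by the junk value of `⁻¹` and of `/`.
lemma mobius_smul_self {E : Type*} [NormedAddCommGroup E] [InnerProductSpace ℂ E] {x : E}
    (hx : x ≠ 0) (ξ : ℂ) :
    mobius x (ξ • x) = ((1 - ξ) / (1 - ξ * (‖x‖ : ℂ) ^ 2)) • x := by
  have inner_smul_self (c : ℂ) : ⟪x, c • x⟫ = c * (‖x‖ : ℂ) ^ 2 := by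
    rw [inner_smul_right, inner_self_eq_norm_sq_to_K]; rfl
  have hx2 : (‖x‖ : ℂ) ^ 2 ≠ 0 := by simpa using hx
  have hm : (1 - ξ * (‖x‖ : ℂ) ^ 2)⁻¹ • (x - ξ • x) =
      ((1 - ξ) / (1 - ξ * (‖x‖ : ℂ) ^ 2)) • x := by
    rw [div_eq_inv_mul, mul_smul, sub_smul, one_smul]
  simp only [mobius, if_neg hx]
  rw [inner_smul_self, hm, inner_smul_self, mul_div_cancel_right₀ _ hx2, sub_self, smul_zero,
    zero_add]

theorem radial_deriv_circle_integral_general {E : Type*} [NormedAddCommGroup E]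
    [InnerProductSpace ℂ E]
    (f : E → ℂ) (hf : AnalyticOnNhd ℂ f (Metric.ball 0 1))
    (x : E) (hx : ‖x‖ < 1) (hx0 : x ≠ 0) :
    ((1 - ‖x‖ ^ 2 : ℝ) : ℂ) * fderiv ℂ f x x =
      -(1 / (2 * Real.pi * Complex.I)) *
        ∮ ξ in C(0, 1), f (mobius x (ξ • x)) / ξ ^ 2 := by
  set μ : ℂ → ℂ := fun ξ => (1 - ξ) / (1 - ξ * (‖x‖ : ℂ) ^ 2)
  have hbound : ∀ ξ ∈ closedBall (0 : ℂ) 1, ‖x‖ * ‖1 - ξ‖ < ‖1 - ξ * (‖x‖ : ℂ) ^ 2‖ :=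
    fun ξ hξ => mul_norm_one_sub_lt (mem_closedBall_zero_iff.1 hξ) (norm_nonneg x) hx
  have hg : DifferentiableOn ℂ (fun ξ => f (μ ξ • x)) (closedBall 0 1) := by
    intro ξ hξ
    have hden : 1 - ξ * (‖x‖ : ℂ) ^ 2 ≠ 0 :=
      norm_pos_iff.1 ((hbound ξ hξ).trans_le' (by positivity))
    have hμx : μ ξ • x ∈ ball 0 1 := by
      rw [mem_ball_zero_iff, norm_smul, norm_div, div_mul_eq_mul_div, mul_comm,
        div_lt_one (norm_pos_iff.2 hden)]
      exact hbound ξ hξ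
    have hμ : DifferentiableAt ℂ μ ξ := by fun_prop (disch := exact hden)
    exact ((hf _ hμx).differentiableAt.comp ξ (hμ.smul_const x)).differentiableWithinAt
  have hderiv : deriv (fun ξ => f (μ ξ • x)) 0 = ((‖x‖ : ℂ) ^ 2 - 1) * fderiv ℂ f x x := by
    have hfx := (hf x (mem_ball_zero_iff.2 hx)).differentiableAt.hasFDerivAt
    have hd : HasDerivAt (fun ξ => f (μ ξ • x)) (fderiv ℂ f x (((‖x‖ : ℂ) ^ 2 - 1) • x)) 0 :=
      hfx.comp_hasDerivAt_of_eq 0 ((hasDerivAt_one_sub_div_one_sub_mul_zero _).smul_const x)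
        (by simp [μ])
    rw [hd.deriv, map_smul, smul_eq_mul]
  have hintegrand : (fun ξ : ℂ => f (mobius x (ξ • x)) / ξ ^ 2) =
      fun ξ => (1 / (ξ - 0) ^ 2) • f (μ ξ • x) := by
    funext ξ
    rw [mobius_smul_self hx0, sub_zero, smul_eq_mul, one_div_mul_eq_div]
  rw [hintegrand, hg.deriv_eq_smul_circleIntegral one_pos, hderiv, smul_eq_mul]
  field_simp
  push_cast
  ring

/-- Integral formula for the radial derivative: for `f` analytic on the unit ball of a
complex Hilbert space and `x ≠ 0` in the ball,
`(1-‖x‖²) f'(x)(x) = -(1/(2πi)) ∮_{|ξ|=1} f(φ_x(ξ x)) dξ/ξ²`. -/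
theorem radial_deriv_circle_integral {E : Type*} [NormedAddCommGroup E]
    [InnerProductSpace ℂ E] [CompleteSpace E]
    (f : E → ℂ) (hf : AnalyticOnNhd ℂ f (Metric.ball 0 1))
    (x : E) (hx : ‖x‖ < 1) (hx0 : x ≠ 0) :
    ((1 - ‖x‖ ^ 2 : ℝ) : ℂ) * fderiv ℂ f x x =
      -(1 / (2 * Real.pi * Complex.I)) *
        ∮ ξ in C(0, 1), f (mobius x (ξ • x)) / ξ ^ 2 :=
  radial_deriv_circle_integral_general f hf x hx hx0
end

section
/- Let f: B_E → ℂ be analytic and x ∈ B_E with x ≠ 0. With s_x = √(1−‖x‖²), the gradient and invariant gradient satisfy the identity s_x²·∇f(x) + s_x·∇̃f(x) = (s_x − 1)·(⟨∇̃f(x), x̄⟩/‖x‖²)·x̄. -/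
open scoped ComplexInnerProductSpace Classical

/-!
With `P_x` the orthogonal projection onto `ℂ ∙ x` and `Q_x = 1 - P_x`, the Möbius map factors
as `φ_x = (s_x Q_x + P_x) ∘ (z ↦ (1 - ⟪x, z⟫)⁻¹ (x - z))`, which gives `φ_x(0) = x` and
`φ_x'(0) = -(s_x² P_x + s_x Q_x)`. This operator is self-adjoint, so the chain rule yields
`∇(f ∘ φ_x)(0) = φ_x'(0) ∇f(x)`. With `g = ∇f(x)`, both `s_x² g + s_x φ_x'(0) g` and
`(s_x - 1) ⟪x, φ_x'(0) g⟫ / ‖x‖² • x` equal `s_x² (1 - s_x) P_x g`; applying the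
conjugation gives the identity.
-/

theorem HasGradientAt.comp_hasFDerivAt {𝕜 E F : Type*} [RCLike 𝕜]
    [NormedAddCommGroup E] [InnerProductSpace 𝕜 E] [CompleteSpace E]
    [NormedAddCommGroup F] [InnerProductSpace 𝕜 F] [CompleteSpace F]
    {f : F → 𝕜} {φ : E → F} {g : F} {L : E →L[𝕜] F} {a : E}
    (hf : HasGradientAt f g (φ a)) (hφ : HasFDerivAt φ L a) :
    HasGradientAt (f ∘ φ) (L.adjoint g) a := by
  rw [hasGradientAt_iff_hasFDerivAt]
  refine (hf.hasFDerivAt.comp a hφ).congr_fderiv ?_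
  ext y
  simp [ContinuousLinearMap.adjoint_inner_left]

section Mobius

variable {E : Type*} [NormedAddCommGroup E] [InnerProductSpace ℂ E]

-- `s_x²` is written `1 - ‖x‖²`, so that `hasFDerivAt_mobius_zero` holds for every `x ≠ 0`.
noncomputable def mobiusFDerivZero (x : E) : E →L[ℂ] E :=
  -(((1 - ‖x‖ ^ 2 : ℝ) : ℂ) • (ℂ ∙ x).starProjection +
    (√(1 - ‖x‖ ^ 2) : ℂ) • (ℂ ∙ x)ᗮ.starProjection)

lemma mobius_eq_comp {x : E} (hx : x ≠ 0) :
    mobius x =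
      ((√(1 - ‖x‖ ^ 2) : ℂ) • (ℂ ∙ x)ᗮ.starProjection + (ℂ ∙ x).starProjection) ∘
        fun z ↦ ((1 : ℂ) - ⟪x, z⟫)⁻¹ • (x - z) := by
  ext z
  simp only [mobius, if_neg hx, Function.comp_apply, add_apply,
    smul_apply, Submodule.starProjection_orthogonal_val,
    Submodule.starProjection_singleton]
  push_cast
  rfl

lemma hasFDerivAt_inv_one_sub_inner_smul_sub_zero (x : E) :
    HasFDerivAt (fun z : E ↦ ((1 : ℂ) - ⟪x, z⟫)⁻¹ • (x - z))
      ((innerSL ℂ x).smulRight x - ContinuousLinearMap.id ℂ E) 0 := by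
  have hinv : HasFDerivAt (fun z : E ↦ ((1 : ℂ) - ⟪x, z⟫)⁻¹) (innerSL ℂ x) 0 := by
    have h0 : (1 : ℂ) - innerSL ℂ x 0 ≠ 0 := by simp
    refine ((hasFDerivAt_inv h0).comp 0 ((innerSL ℂ x).hasFDerivAt.const_sub 1)).congr_fderiv ?_
    ext y; simp
  refine (hinv.smul ((hasFDerivAt_id (0 : E)).const_sub x)).congr_fderiv ?_
  ext y; simp [sub_eq_add_neg, add_comm]

lemma hasFDerivAt_mobius_zero {x : E} (hx : x ≠ 0) :
    HasFDerivAt (mobius x) (mobiusFDerivZero x) 0 := by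
  rw [mobius_eq_comp hx]
  refine ((ContinuousLinearMap.hasFDerivAt _).comp 0
    (hasFDerivAt_inv_one_sub_inner_smul_sub_zero x)).congr_fderiv ?_
  ext y
  have hP := Submodule.smul_starProjection_singleton ℂ y (v := x)
  simp only [mobiusFDerivZero, ContinuousLinearMap.comp_apply, add_apply, smul_apply, neg_apply,
    sub_apply, ContinuousLinearMap.smulRight_apply, innerSL_apply_apply,
    ContinuousLinearMap.id_apply, map_sub, map_smul, Submodule.starProjection_orthogonal_val]
  rw [Submodule.starProjection_eq_self_iff.mpr (Submodule.mem_span_singleton_self x)]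
  push_cast at hP ⊢
  linear_combination (norm := module) -hP

lemma mobius_apply_zero {x : E} (hx : x ≠ 0) : mobius x 0 = x := by
  simp [mobius_eq_comp hx,
    Submodule.starProjection_eq_self_iff.mpr (Submodule.mem_span_singleton_self x)]

lemma isSelfAdjoint_mobiusFDerivZero [CompleteSpace E] (x : E) :
    IsSelfAdjoint (mobiusFDerivZero x) :=
  ((IsSelfAdjoint.smul (Complex.conj_ofReal _) (isSelfAdjoint_starProjection _)).add
    (IsSelfAdjoint.smul (Complex.conj_ofReal _) (isSelfAdjoint_starProjection _))).neg

lemma sq_smul_add_smul_mobiusFDerivZero {x : E} (hx : ‖x‖ ≤ 1) (hx0 : x ≠ 0) (g : E) :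
    (√(1 - ‖x‖ ^ 2) : ℂ) ^ 2 • g + (√(1 - ‖x‖ ^ 2) : ℂ) • mobiusFDerivZero x g =
      (((√(1 - ‖x‖ ^ 2) : ℂ) - 1) * (⟪x, mobiusFDerivZero x g⟫ / (‖x‖ ^ 2 : ℂ))) •
        x := by
  have hs : (√(1 - ‖x‖ ^ 2) : ℂ) ^ 2 = 1 - ‖x‖ ^ 2 := by
    norm_cast; rw [Real.sq_sqrt (by nlinarith [norm_nonneg x])]
  have hx1 : (‖x‖ : ℂ) ≠ 0 := by simpa using hx0
  simp only [mobiusFDerivZero, neg_apply, add_apply, smul_apply,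
    Submodule.starProjection_orthogonal_val, Submodule.starProjection_singleton]
  simp only [inner_neg_right, inner_add_right, inner_smul_right, inner_sub_right,
    inner_self_eq_norm_sq_to_K]
  push_cast
  match_scalars
  · ring
  · -- `starProjection_singleton` casts `‖x‖ ^ 2` through `algebraMap ℝ ℂ`
    simp only [Algebra.cast, Complex.coe_algebraMap]
    field_simp
    linear_combination ⟪x, g⟫ * hs

end Mobius

/-- Here `conj` is the coordinatewise conjugation `z ↦ z̄` determined by the fixed orthonormal
basis of `E`. The paper's gradient `∇f(x)`, characterized by `f'(x)(y) = ⟨y, conj ∇f(x)⟩`,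
equals `conj (gradient f x)` for Mathlib's `gradient`; the paper's inner product `⟨a, b⟩` is
Mathlib's `⟪b, a⟫`. -/
theorem gradient_invariant_gradient_identity_general {E : Type*} [NormedAddCommGroup E]
    [InnerProductSpace ℂ E] [CompleteSpace E]
    (conj : E →ₗ⋆[ℂ] E)
    (hinner : ∀ a b : E, ⟪conj a, conj b⟫ = ⟪b, a⟫)
    (f : E → ℂ) (hf : AnalyticOnNhd ℂ f (Metric.ball 0 1))
    (x : E) (hx : ‖x‖ < 1) (hx0 : x ≠ 0) :
    ((Real.sqrt (1 - ‖x‖ ^ 2) : ℂ) ^ 2) • conj (gradient f x) +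
        (Real.sqrt (1 - ‖x‖ ^ 2) : ℂ) • conj (gradient (f ∘ mobius x) 0) =
      (((Real.sqrt (1 - ‖x‖ ^ 2) : ℂ) - 1) *
          (⟪conj x, conj (gradient (f ∘ mobius x) 0)⟫ / (‖x‖ ^ 2 : ℂ))) •
        conj x := by
  have hfx : HasGradientAt f (gradient f x) (mobius x 0) := by
    rw [mobius_apply_zero hx0]
    exact (hf x (mem_ball_zero_iff.mpr hx)).differentiableAt.hasGradientAt
  have hcomp : gradient (f ∘ mobius x) 0 = mobiusFDerivZero x (gradient f x) := by
    rw [(hfx.comp_hasFDerivAt (hasFDerivAt_mobius_zero hx0)).gradient,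
      (isSelfAdjoint_mobiusFDerivZero x).adjoint_eq]
  have key := congrArg conj (sq_smul_add_smul_mobiusFDerivZero hx.le hx0 (gradient f x))
  rw [hcomp, hinner]
  simpa only [map_add, map_smulₛₗ, map_mul, map_div₀, map_sub, map_pow, map_one,
    Complex.conj_ofReal, inner_conj_symm] using key

/-- The identity `s_x² ∇f(x) + s_x ∇̃f(x) = (s_x - 1)(⟨∇̃f(x), x̄⟩/‖x‖²) x̄` for analytic
`f : B_E → ℂ` and `0 ≠ x ∈ B_E`, where `s_x = √(1-‖x‖²)`.

Here `conj` is the coordinatewise conjugation `z ↦ z̄` determined by the fixed orthonormal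
basis of `E`: a conjugate-linear involution satisfying `⟪conj a, conj b⟫ = ⟪b, a⟫`.  The
paper's gradient `∇f(x)`, characterized by `f'(x)(y) = ⟨y, conj ∇f(x)⟩` (inner product
linear in the first variable), equals `conj (gradient f x)` for Mathlib's `gradient`, and
the invariant gradient is `∇̃f(x) = ∇(f∘φ_x)(0)`; the paper's inner product `⟨a, b⟩` is
Mathlib's `⟪b, a⟫`. -/
theorem gradient_invariant_gradient_identity {E : Type*} [NormedAddCommGroup E]
    [InnerProductSpace ℂ E] [CompleteSpace E]
    (conj : E →ₗ⋆[ℂ] E) (hconj : ∀ z, conj (conj z) = z)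
    (hinner : ∀ a b : E, ⟪conj a, conj b⟫ = ⟪b, a⟫)
    (f : E → ℂ) (hf : AnalyticOnNhd ℂ f (Metric.ball 0 1))
    (x : E) (hx : ‖x‖ < 1) (hx0 : x ≠ 0) :
    ((Real.sqrt (1 - ‖x‖ ^ 2) : ℂ) ^ 2) • conj (gradient f x) +
        (Real.sqrt (1 - ‖x‖ ^ 2) : ℂ) • conj (gradient (f ∘ mobius x) 0) =
      (((Real.sqrt (1 - ‖x‖ ^ 2) : ℂ) - 1) *
          (⟪conj x, conj (gradient (f ∘ mobius x) 0)⟫ / (‖x‖ ^ 2 : ℂ))) •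
        conj x :=
  gradient_invariant_gradient_identity_general conj hinner f hf x hx hx0
end

section
/- For every natural number k ≥ 1, sup over 0 < λ < 1 of (1 − λ²)·k·λ^k / (1 − λ^{2k}) is at least (1 − 1/k)^{k/2}; in particular these suprema are bounded below by a positive constant independent of k. -/
/-! Bernoulli's inequality `1 - t^{2k} ≤ k (1 - t²)` shows that the quantity under the supremum
is at least `t^k`. Letting `t → 1⁻`, the supremum is at least `1`, which dominates
`(1 - 1/k)^{k/2}` and serves as the uniform constant. -/

open Filter Topology Set

/-- The quotient `(1 - ‖z‖²) |Rφ_k(z)| / (1 - |φ_k(z)|²)` for `φ_k(z) = ⟨z, e_k⟩^k` at `z = t e_k`. -/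
noncomputable def radialQuotient (k : ℕ) (t : ℝ) : ℝ :=
  (1 - t ^ 2) * k * t ^ k / (1 - t ^ (2 * k))

section

variable {k : ℕ} {t : ℝ}

lemma one_sub_pow_two_mul_pos (hk : 1 ≤ k) (ht₀ : 0 ≤ t) (ht₁ : t < 1) :
    0 < 1 - t ^ (2 * k) := by
  have : t ^ (2 * k) < 1 := pow_lt_one₀ ht₀ ht₁ (by omega)
  linarith

lemma pow_le_radialQuotient (hk : 1 ≤ k) (ht₀ : 0 ≤ t) (ht₁ : t < 1) :
    t ^ k ≤ radialQuotient k t := by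
  have bernoulli : 1 - t ^ (2 * k) ≤ k * (1 - t ^ 2) := by
    have := one_add_mul_sub_le_pow (by nlinarith : -1 ≤ t ^ 2) k
    rw [← pow_mul] at this
    linarith
  rw [radialQuotient, le_div_iff₀ (one_sub_pow_two_mul_pos hk ht₀ ht₁)]
  nlinarith [pow_nonneg ht₀ k]

lemma radialQuotient_le (hk : 1 ≤ k) (ht₀ : 0 ≤ t) (ht₁ : t < 1) :
    radialQuotient k t ≤ k := by
  have hsq : t ^ 2 ≤ 1 := pow_le_one₀ ht₀ ht₁.le
  have hpow : t ^ (2 * k) ≤ t ^ 2 := pow_le_pow_of_le_one ht₀ ht₁.le (by omega)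
  rw [radialQuotient, div_le_iff₀ (one_sub_pow_two_mul_pos hk ht₀ ht₁)]
  calc (1 - t ^ 2) * k * t ^ k
      ≤ (1 - t ^ 2) * k * 1 := by gcongr; exact pow_le_one₀ ht₀ ht₁.le
    _ ≤ k * (1 - t ^ (2 * k)) := by nlinarith [(Nat.cast_nonneg k : (0 : ℝ) ≤ k)]

end

lemma one_le_iSup_radialQuotient {k : ℕ} (hk : 1 ≤ k) :
    1 ≤ ⨆ t : Ioo (0 : ℝ) 1, radialQuotient k t := by
  have hbdd : BddAbove (range fun t : Ioo (0 : ℝ) 1 => radialQuotient k t) := by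
    refine ⟨k, ?_⟩
    rintro _ ⟨⟨t, ht₀, ht₁⟩, rfl⟩
    exact radialQuotient_le hk ht₀.le ht₁
  have hlim : Tendsto (fun t : ℝ => t ^ k) (𝓝[<] 1) (𝓝 1) := by
    simpa using ((continuous_pow k).tendsto (1 : ℝ)).mono_left nhdsWithin_le_nhds
  refine le_of_tendsto hlim ?_
  filter_upwards [Ioo_mem_nhdsLT zero_lt_one] with t ht
  exact (pow_le_radialQuotient hk ht.1.le ht.2).trans (le_ciSup hbdd ⟨t, ht⟩)

/-- For every `k ≥ 1`, `sup_{0<t<1} (1-t²)·k·t^k/(1-t^{2k}) ≥ (1-1/k)^{k/2}`; in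
particular these suprema are bounded below by a positive constant independent of `k`. -/
theorem sup_lower_bound :
    (∀ k : ℕ, 1 ≤ k →
        (1 - 1 / (k : ℝ)) ^ ((k : ℝ) / 2) ≤
          ⨆ t : Set.Ioo (0 : ℝ) 1,
            (1 - (t : ℝ) ^ 2) * k * (t : ℝ) ^ k / (1 - (t : ℝ) ^ (2 * k))) ∧
      ∃ c : ℝ, 0 < c ∧ ∀ k : ℕ, 1 ≤ k →
        c ≤ ⨆ t : Set.Ioo (0 : ℝ) 1,
              (1 - (t : ℝ) ^ 2) * k * (t : ℝ) ^ k / (1 - (t : ℝ) ^ (2 * k)) := by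
  refine ⟨fun k hk => ?_, 1, one_pos, fun k hk => one_le_iSup_radialQuotient hk⟩
  have hinv : 1 / (k : ℝ) ≤ 1 := div_le_one_of_le₀ (by exact_mod_cast hk) (Nat.cast_nonneg k)
  have hbase : (1 - 1 / (k : ℝ)) ^ ((k : ℝ) / 2) ≤ 1 :=
    Real.rpow_le_one (sub_nonneg.2 hinv) (sub_le_self _ (by positivity)) (by positivity)
  exact hbase.trans (one_le_iSup_radialQuotient hk)
end
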